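/- arXiv:1505.01389 — 3 statements merged into one kernel-verified Lean document; each statement's English description precedes it below -/
import Mathlib

section
/- Let t_j(x) = (1/j)(x_1^j + ⋯ + x_n^j) for j = 1,…,r be the normalized power sums in variables x_1,…,x_n. Then the coefficient of x_1^r x_2^r ⋯ x_n^r in the monomial t_1(x)^{k_1} t_2(x)^{k_2} ⋯ t_r(x)^{k_r} equals the coefficient of u_1^{k_1}⋯u_r^{k_r}/(k_1!⋯k_r!) in (h_r(u_1, u_2/2,…, u_r/r, 0,…))^n; that is, ∑_{k_1,…,k_r ≥ 0} [x_1^r⋯x_n^r](t_1(x)^{k_1}⋯t_r(x)^{k_r}) ∏_j u_j^{k_j}/k_j! = (h_r(u_1,u_2/2,…,u_r/r,0,…))^n as polynomials in u_1,…,u_r. -/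
/-- `hpoly k t` is the polynomial `h_k` in the variables `t_1, t_2, …` defined by the
generating function `∑_{k≥0} h_k(t) z^k = exp(∑_{j≥1} t_j z^j)`; concretely it is the
coefficient of `z^k` in `∑_{m=0}^{k} (1/m!) (∑_{j=1}^{k} t_j z^j)^m` (higher terms of the
exponential series, and variables `t_j` with `j > k`, do not contribute to this
coefficient). -/
noncomputable def hpoly (k : ℕ) (t : ℕ → ℂ) : ℂ :=
  Polynomial.coeff
    (∑ m ∈ Finset.range (k + 1),
      ((m.factorial : ℂ)⁻¹) •
        (∑ j ∈ Finset.Icc 1 k, Polynomial.C (t j) * Polynomial.X ^ j) ^ m) k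

/-- The normalized power sum `t_j(x) = (1/j)(x_1^j + ⋯ + x_n^j)` as a polynomial in
`x_1, …, x_n`. -/
noncomputable def npsum (n j : ℕ) : MvPolynomial (Fin n) ℂ :=
  ((j : ℂ))⁻¹ • ∑ i : Fin n, MvPolynomial.X i ^ j

/-! Multiplying by `∏ u_j^{k_j}/k_j!` and summing over `k` turns the left side into the
coefficient of `x_1^r ⋯ x_n^r` in `exp(∑_j u_j t_j(x))`; the exponential may be truncated at
order `n r`, since higher powers only contain monomials of larger total degree. As
`∑_j u_j t_j(x) = ∑_i a(x_i)` with `a(z) = ∑_j (u_j / j) z^j`, the exponential factors over the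
variables, and the coefficient of `x_i^r` in `exp(a(x_i))` is `h_r(u_1, u_2/2, …, u_r/r)`. -/

open Finset MvPolynomial
open scoped Nat

section TruncExp

variable (K : Type*) {A : Type*} [Field K]

noncomputable def truncExp [Semiring A] [Module K A] (N : ℕ) (a : A) : A :=
  ∑ m ∈ range (N + 1), ((m ! : K))⁻¹ • a ^ m

variable {K} [CharZero K] [CommSemiring A] [Algebra K A]

theorem inv_factorial_smul_sum_pow {ι : Type*} [DecidableEq ι] (s : Finset ι) (f : ι → A)
    (m : ℕ) :
    ((m ! : K))⁻¹ • (∑ i ∈ s, f i) ^ m =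
      ∑ k ∈ piAntidiag s m, ∏ i ∈ s, (((k i)! : K))⁻¹ • f i ^ k i := by
  rw [sum_pow_eq_sum_piAntidiag, smul_sum]
  refine sum_congr rfl fun k hk => ?_
  have hfact : ((m ! : K))⁻¹ * Nat.multinomial s k = ∏ i ∈ s, (((k i)! : K))⁻¹ := by
    have hpos : (Nat.multinomial s k : K) ≠ 0 :=
      Nat.cast_ne_zero.2 (Nat.multinomial_pos s k).ne'
    rw [← (mem_piAntidiag.1 hk).1, ← Nat.multinomial_spec, Nat.cast_mul, mul_inv,
      inv_mul_cancel_right₀ hpos, Nat.cast_prod, prod_inv_distrib]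
  rw [prod_smul, ← hfact, mul_smul, Nat.cast_smul_eq_nsmul, nsmul_eq_mul]

variable {ι : Type*} [Fintype ι] [DecidableEq ι]

variable (ι) in
def tuplesOfSumLE (N : ℕ) : Finset (ι → ℕ) :=
  (range (N + 1)).biUnion fun m => piAntidiag univ m

theorem mem_tuplesOfSumLE {N : ℕ} {k : ι → ℕ} : k ∈ tuplesOfSumLE ι N ↔ ∑ i, k i ≤ N := by
  simp [tuplesOfSumLE]

theorem truncExp_sum (N : ℕ) (f : ι → A) :
    truncExp K N (∑ i, f i) = ∑ k ∈ tuplesOfSumLE ι N, ∏ i, (((k i)! : K))⁻¹ • f i ^ k i := by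
  have hdisj : (range (N + 1) : Set ℕ).PairwiseDisjoint fun m => piAntidiag (univ : Finset ι) m :=
    fun m _ m' _ hne => disjoint_left.2 fun k hk hk' =>
      hne ((mem_piAntidiag.1 hk).1.symm.trans (mem_piAntidiag.1 hk').1)
  rw [truncExp, tuplesOfSumLE, sum_biUnion hdisj]
  exact sum_congr rfl fun m _ => inv_factorial_smul_sum_pow _ _ _

end TruncExp

theorem Fin.sum_univ_succ_eq_sum_Icc {M : Type*} [AddCommMonoid M] (f : ℕ → M) (r : ℕ) :
    ∑ j : Fin r, f (j + 1) = ∑ j ∈ Icc 1 r, f j := by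
  rw [Fin.sum_univ_eq_sum_range (fun j => f (j + 1)), range_eq_Ico, sum_Ico_add' f,
    zero_add, Ico_add_one_right_eq_Icc]

theorem Polynomial.coeff_pow_eq_zero_of_lt {R : Type*} [CommSemiring R] {p : Polynomial R}
    (hp : p.coeff 0 = 0) {c m : ℕ} (h : m < c) : (p ^ c).coeff m = 0 :=
  X_pow_dvd_iff.1 (pow_dvd_pow_of_dvd (X_dvd_iff.2 hp) c) m h

section Coefficients

variable {σ : Type*}

theorem coeff_prod_aeval_X {R : Type*} [CommSemiring R] [Fintype σ] [DecidableEq σ]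
    (p : σ → Polynomial R) (d : σ → ℕ) :
    coeff (Finsupp.equivFunOnFinite.symm d) (∏ i, Polynomial.aeval (X i) (p i)) =
      ∏ i, (p i).coeff (d i) := by
  have hexpand (i : σ) : Polynomial.aeval (X i) (p i) =
      ∑ a ∈ range (max ((p i).natDegree + 1) (d i + 1)),
        monomial (Finsupp.single i a) ((p i).coeff a) := by
    simp_rw [← C_mul_X_pow_eq_monomial, ← smul_eq_C_mul]
    exact Polynomial.aeval_eq_sum_range' (by omega) _
  simp_rw [hexpand, prod_univ_sum, ← monomial_sum_prod,
    ← Finsupp.equivFunOnFinite_symm_eq_sum, coeff_sum, coeff_monomial,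
    Finsupp.equivFunOnFinite.symm.injective.eq_iff]
  rw [sum_ite_eq', if_pos (Fintype.mem_piFinset.2 fun i => mem_range.2 (by omega))]

variable {K : Type*} [Field K] [CharZero K]

theorem coeff_truncExp_sum_C_mul {ι : Type*} [Fintype ι] [DecidableEq ι] (N : ℕ) (c : ι → K)
    (f : ι → MvPolynomial σ K) (d : σ →₀ ℕ) :
    coeff d (truncExp K N (∑ i, C (c i) * f i)) =
      ∑ k ∈ tuplesOfSumLE ι N, coeff d (∏ i, f i ^ k i) * ∏ i, c i ^ k i / ((k i)! : K) := by
  rw [truncExp_sum, coeff_sum]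
  refine sum_congr rfl fun k _ => ?_
  simp_rw [prod_smul, mul_pow, prod_mul_distrib, ← C_pow, ← map_prod, coeff_smul, coeff_C_mul,
    smul_eq_mul, div_eq_mul_inv, prod_mul_distrib]
  ring

theorem coeff_truncExp_sum_aeval_X [Fintype σ] [DecidableEq σ] {p : Polynomial K}
    (hp : p.coeff 0 = 0) (d : σ → ℕ) {N : ℕ} (hN : ∑ i, d i ≤ N) :
    coeff (Finsupp.equivFunOnFinite.symm d) (truncExp K N (∑ i, Polynomial.aeval (X i) p)) =
      ∏ i, (truncExp K (d i) p).coeff (d i) := by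
  have hbox : Fintype.piFinset (fun i => range (d i + 1)) ⊆ tuplesOfSumLE σ N := fun c hc =>
    mem_tuplesOfSumLE.2 <| (sum_le_sum fun i _ =>
      Nat.lt_succ_iff.1 (mem_range.1 (Fintype.mem_piFinset.1 hc i))).trans hN
  have hterm (c : σ → ℕ) :
      coeff (Finsupp.equivFunOnFinite.symm d)
          (∏ i, ((c i)! : K)⁻¹ • Polynomial.aeval (X i) p ^ c i) =
        ∏ i, ((c i)! : K)⁻¹ * (p ^ c i).coeff (d i) := by
    simp_rw [← map_pow, ← map_smul, coeff_prod_aeval_X, Polynomial.coeff_smul, smul_eq_mul]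
  have hvanish : ∀ c ∈ tuplesOfSumLE σ N, c ∉ Fintype.piFinset (fun i => range (d i + 1)) →
      ∏ i, ((c i)! : K)⁻¹ * (p ^ c i).coeff (d i) = 0 := fun c _ hc => by
    obtain ⟨i, hi⟩ : ∃ i, d i < c i := by simpa [Nat.lt_succ_iff] using hc
    exact prod_eq_zero (mem_univ i) (by rw [Polynomial.coeff_pow_eq_zero_of_lt hp hi, mul_zero])
  rw [truncExp_sum, coeff_sum]
  simp_rw [hterm]
  rw [← sum_subset hbox hvanish,
    ← prod_univ_sum (fun i => range (d i + 1)) fun i m => ((m ! : K))⁻¹ * (p ^ m).coeff (d i)]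
  simp_rw [truncExp, Polynomial.finsetSum_coeff, Polynomial.coeff_smul, smul_eq_mul]

end Coefficients

theorem sum_C_mul_npsum (n r : ℕ) (u : ℕ → ℂ) :
    ∑ j : Fin r, C (u (j + 1)) * npsum n (j + 1) =
      ∑ i, Polynomial.aeval (X i)
        (∑ j ∈ Icc 1 r, Polynomial.C (u j / (j : ℂ)) * Polynomial.X ^ j) := by
  have hterm (j : ℕ) : C (u j) * npsum n j = ∑ i, C (u j / (j : ℂ)) * X i ^ j := by
    rw [npsum, smul_eq_C_mul, mul_sum, mul_sum]
    simp_rw [← mul_assoc, ← C_mul, div_eq_mul_inv]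
  simp_rw [Fin.sum_univ_succ_eq_sum_Icc (fun j => C (u j) * npsum n j), hterm, map_sum,
    map_mul, Polynomial.aeval_C, Polynomial.aeval_X_pow, algebraMap_eq]
  exact sum_comm

theorem hpoly_eq_coeff_truncExp (k : ℕ) (t : ℕ → ℂ) :
    hpoly k t =
      (truncExp ℂ k (∑ j ∈ Icc 1 k, Polynomial.C (t j) * Polynomial.X ^ j)).coeff k :=
  rfl

theorem isHomogeneous_npsum (n j : ℕ) : (npsum n j).IsHomogeneous j := by
  rw [npsum, smul_eq_C_mul]
  exact (IsHomogeneous.sum _ _ _ fun i _ => isHomogeneous_X_pow i j).C_mul _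

theorem coeff_prod_npsum_pow_eq_zero {n r : ℕ} {k : Fin r → ℕ} {d : Fin n →₀ ℕ}
    (hd : d.degree < ∑ j, k j) : coeff d (∏ j : Fin r, npsum n (j + 1) ^ k j) = 0 :=
  (IsHomogeneous.prod _ _ _ fun _ _ => (isHomogeneous_npsum n _).pow _).coeff_eq_zero
    (hd.trans_le (sum_le_sum fun j _ => Nat.le_mul_of_pos_left _ j.succ_pos)).ne

/-- `∑_{k_1,…,k_r ≥ 0} [x_1^r ⋯ x_n^r](t_1(x)^{k_1} ⋯ t_r(x)^{k_r}) ∏_j u_j^{k_j}/k_j!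
  = (h_r(u_1, u_2/2, …, u_r/r, 0, …))^n`
(the sum has only finitely many nonzero terms, so it is taken as a `tsum`; the
variables of the cycle-index side are `u_{j+1}` for `j : Fin r`). -/
theorem stmt_9 (r n : ℕ) (u : ℕ → ℂ) :
    ∑' k : Fin r → ℕ,
      (MvPolynomial.coeff (Finsupp.equivFunOnFinite.symm fun _ : Fin n => r)
          (∏ j : Fin r, npsum n ((j : ℕ) + 1) ^ k j)) *
        ∏ j : Fin r, u ((j : ℕ) + 1) ^ k j / ((k j).factorial : ℂ) =
    (hpoly r (fun j => u j / (j : ℂ))) ^ n := by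
  classical
  have hvanish : ∀ k ∉ tuplesOfSumLE (Fin r) (n * r),
      coeff (Finsupp.equivFunOnFinite.symm fun _ : Fin n => r)
          (∏ j : Fin r, npsum n (j + 1) ^ k j) *
        ∏ j : Fin r, u (j + 1) ^ k j / ((k j)! : ℂ) = 0 := fun k hk => by
    rw [coeff_prod_npsum_pow_eq_zero, zero_mul]
    simpa [Finsupp.degree_eq_sum, mul_comm, mem_tuplesOfSumLE] using hk
  rw [tsum_eq_sum hvanish, ← coeff_truncExp_sum_C_mul, sum_C_mul_npsum,
    coeff_truncExp_sum_aeval_X (by simp) _ (by simp [mul_comm]), prod_const, card_univ,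
    Fintype.card_fin, hpoly_eq_coeff_truncExp]
end

section
/- Gessel's Toeplitz determinant identity: for two sequences of indeterminates t = (t_1,t_2,…) and s = (s_1,s_2,…), and any d ≥ 1, ∑_{λ : ℓ(λ) ≤ d} s_λ(t) s_λ(s) = det_{1≤i,j≤d}(φ_{i-j}(t,s)), where φ_m(t,s) is the coefficient of z^m in exp(∑_{k≥1} t_k z^k + ∑_{k≥1} s_k z^{-k}), the sum is over all partitions λ with at most d parts, and s_λ denotes the Schur polynomial in normalized power sum variables via the Jacobi–Trudi formula. -/
/-- `h_m` for an integer index: `h_m = 0` for `m < 0`. -/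
noncomputable def hZ (m : ℤ) (t : ℕ → ℂ) : ℂ :=
  if 0 ≤ m then hpoly m.toNat t else 0

/-- The Schur polynomial `s_λ` in the normalized power sum variables, defined by the
Jacobi–Trudi formula `s_λ(t) = det_{1≤i,j≤ℓ(λ)} (h_{λ_i - i + j}(t))`, where
`λ_1 ≥ λ_2 ≥ ⋯` are the parts of `λ` in decreasing order. -/
noncomputable def schur {n : ℕ} (lam : n.Partition) (t : ℕ → ℂ) : ℂ :=
  Matrix.det (Matrix.of fun i j : Fin (lam.parts.sort (· ≤ ·)).reverse.length =>
    hZ ((((lam.parts.sort (· ≤ ·)).reverse.get i : ℕ) : ℤ) - (i : ℤ) + (j : ℤ)) t)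

/-- The graded Toeplitz symbol `exp(∑_{k≥1} t_k (Xz)^k) · exp(∑_{k≥1} s_k (X/z)^k)`:
a formal power series in the grading (book-keeping) variable `X` whose coefficients are
Laurent polynomials in `z` (the variable of `LaurentPolynomial ℂ`).  Here
`exp(∑ t_k z^k) = ∑_a h_a(t) z^a` by the definition of the `h_a`. -/
noncomputable def gesselSymbol (t s : ℕ → ℂ) : PowerSeries (LaurentPolynomial ℂ) :=
  (PowerSeries.mk fun a => LaurentPolynomial.C (hpoly a t) * LaurentPolynomial.T (a : ℤ)) *
  (PowerSeries.mk fun b => LaurentPolynomial.C (hpoly b s) * LaurentPolynomial.T (-(b : ℤ)))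

/-- `phi m t s` is the coefficient of `z^m` in
`exp(∑_{k≥1} t_k z^k + ∑_{k≥1} s_k z^{-k})`, recorded as a formal power series in the
grading variable `X` (with `t_k`, `s_k` placed in degree `k`), so that all occurring
sums are finite. -/
noncomputable def phi (m : ℤ) (t s : ℕ → ℂ) : PowerSeries ℂ :=
  PowerSeries.mk fun N => (PowerSeries.coeff N (gesselSymbol t s)).coeff m

/-!
Grade by a variable `X` in which `t_k` and `s_k` have degree `k`, and put `a_c = h_c(t) X^c`,
`b_c = h_c(s) X^c` (zero for `c < 0`). Then `φ_{i-j} = ∑_e b_{e-i} a_{e-j}`, and modulo `X^(N+1)`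
the sum may be truncated to `0 ≤ e < N + d`; so in degree `N` the Toeplitz determinant is
`det (B Aᵀ)` for the `d × (N + d)` matrices `B = (b_{e-i})`, `A = (a_{e-j})`. By Cauchy–Binet
this is a sum over strictly increasing `g : Fin d → Fin (N + d)` of products of maximal minors.
The minor of `g` is homogeneous of degree `∑ g_j - ∑ i`, and writing `g_j = λ_{d-1-j} + j` for a
partition `λ` with at most `d` parts (padded with zeros) turns it into the Jacobi–Trudi
determinant of `s_λ`.
-/

open Finset Function PowerSeries
open scoped Matrix

theorem Finset.sum_injective_eq_sum_strictMono_sum_perm {ι M : Type*} [Fintype ι] [LinearOrder ι]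
    [AddCommMonoid M] {d : ℕ} (F : (Fin d → ι) → M) :
    ∑ p : Fin d → ι with Injective p, F p =
      ∑ g : Fin d → ι with StrictMono g, ∑ σ : Equiv.Perm (Fin d), F (g ∘ σ) := by
  rw [← sum_product']
  symm
  refine sum_nbij' (fun x => x.1 ∘ x.2) (fun p => (p ∘ Tuple.sort p, (Tuple.sort p)⁻¹))
    ?_ ?_ ?_ ?_ (fun _ _ => rfl)
  · simp only [mem_product, mem_filter_univ, mem_univ, and_true]
    exact fun x hx => hx.injective.comp x.2.injective
  · simp only [mem_product, mem_filter_univ, mem_univ, and_true]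
    exact fun p hp => (Tuple.monotone_sort p).strictMono_of_injective (hp.comp (Equiv.injective _))
  · simp only [mem_product, mem_filter_univ, mem_univ, and_true]
    intro x hx
    have hsort : x.2⁻¹ = Tuple.sort (x.1 ∘ x.2) := by
      rw [Tuple.eq_sort_iff]
      refine ⟨by simpa [Function.comp_def] using hx.monotone, fun i j hij heq => ?_⟩
      simp only [Equiv.Perm.coe_inv, comp_apply, Equiv.apply_symm_apply, hx.injective.eq_iff] at heq
      exact absurd heq hij.ne
    ext i <;> simp [← hsort]
  · intro p _
    ext i
    simp

theorem Matrix.det_mul_eq_sum_strictMono {R ι : Type*} [CommRing R] [Fintype ι] [LinearOrder ι]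
    {d : ℕ} (A : Matrix (Fin d) ι R) (B : Matrix ι (Fin d) R) :
    (A * B).det =
      ∑ g : Fin d → ι with StrictMono g, (A.submatrix id g).det * (B.submatrix g id).det := by
  have expand : (A * B).det = ∑ p : Fin d → ι, (A.submatrix id p).det * ∏ i, B (p i) i := by
    simp only [det_apply', mul_apply, prod_univ_sum, mul_sum, Fintype.piFinset_univ,
      submatrix_apply, id, sum_mul, prod_mul_distrib, mul_assoc]
    exact sum_comm
  have vanish : ∀ p : Fin d → ι, ¬ Injective p → (A.submatrix id p).det * ∏ i, B (p i) i = 0 := by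
    intro p hp
    obtain ⟨i, j, hij, hne⟩ : ∃ i j, p i = p j ∧ i ≠ j := by simpa [Injective] using hp
    rw [det_zero_of_column_eq hne (fun k => by simp [hij]), zero_mul]
  rw [expand, ← sum_filter_of_ne (fun p _ h => not_not.mp (mt (vanish p) h)),
    sum_injective_eq_sum_strictMono_sum_perm]
  refine sum_congr rfl fun g _ => ?_
  rw [det_apply (B.submatrix g id), mul_sum]
  refine sum_congr rfl fun σ _ => ?_
  rw [show A.submatrix id (g ∘ σ) = (A.submatrix id g).submatrix id σ from rfl, det_permute']
  simp [Units.smul_def, mul_comm, mul_left_comm]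

lemma PowerSeries.coeff_det_eq_of_coeff_eq {R n : Type*} [CommRing R] [Fintype n] [DecidableEq n]
    {M₁ M₂ : Matrix n n R⟦X⟧} {N : ℕ}
    (h : ∀ i j, ∀ k ≤ N, coeff k (M₁ i j) = coeff k (M₂ i j)) :
    coeff N M₁.det = coeff N M₂.det := by
  let π := Ideal.Quotient.mk (Ideal.span {(X : R⟦X⟧) ^ (N + 1)})
  have eq_iff (f g : R⟦X⟧) : π f = π g ↔ ∀ k < N + 1, coeff k f = coeff k g := by
    simp only [π, Ideal.Quotient.eq, Ideal.mem_span_singleton, X_pow_dvd_iff, map_sub, sub_eq_zero]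
  have hπ : π.mapMatrix M₁ = π.mapMatrix M₂ := by
    ext i j
    exact (eq_iff _ _).mpr fun k hk => h i j k (by omega)
  exact (eq_iff M₁.det M₂.det).mp (by rw [RingHom.map_det, RingHom.map_det, hπ]) N N.lt_succ_self

lemma sum_fin_sub_eq_sum_range {M : Type*} [AddCommMonoid M] (F : ℤ → M) {k i K : ℕ}
    (hF : ∀ c, F c ≠ 0 → 0 ≤ c ∧ c ≤ k) (hK : k + i < K) :
    ∑ e : Fin K, F ((e : ℤ) - i) = ∑ b ∈ range (k + 1), F b := by
  symm
  refine sum_bij_ne_zero (fun b hb _ => (⟨b + i, by grind⟩ : Fin K)) (fun _ _ _ => mem_univ _)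
    (fun _ _ _ _ _ _ h => by simpa using h) (fun e _ he => ?_) (fun b _ _ => by simp)
  obtain ⟨h0, hk⟩ := hF _ he
  refine ⟨((e : ℤ) - i).toNat, mem_range.mpr (by omega), by rwa [Int.toNat_of_nonneg h0],
    Fin.ext ?_⟩
  simp only
  omega

lemma List.ofFn_getD_eq_append_replicate {α : Type*} (l : List α) (a : α) {d : ℕ}
    (hl : l.length ≤ d) :
    List.ofFn (fun i : Fin d => l.getD i a) = l ++ List.replicate (d - l.length) a := by
  refine List.ext_getElem ?_ fun i h₁ h₂ => ?_
  · rw [List.length_ofFn, List.length_append, List.length_replicate]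
    omega
  simp only [List.getElem_ofFn, List.getD_eq_getElem?_getD, List.getElem_append]
  split_ifs with h
  · simp [h]
  · simp [List.getElem?_eq_none (not_lt.mp h)]

lemma Antitone.eq_of_map_univ_eq {α : Type*} [LinearOrder α] {d : ℕ} {μ ν : Fin d → α}
    (hμ : Antitone μ) (hν : Antitone ν) (h : univ.val.map μ = univ.val.map ν) : μ = ν := by
  rw [Fin.univ_val_map, Fin.univ_val_map, Multiset.coe_eq_coe] at h
  exact List.ofFn_inj.mp (h.eq_of_sortedGE hμ.sortedGE_ofFn hν.sortedGE_ofFn)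

namespace Nat.Partition

variable {n : ℕ}

def sortedParts (lam : n.Partition) : List ℕ := (lam.parts.sort (· ≤ ·)).reverse

def paddedParts (lam : n.Partition) (d : ℕ) (i : Fin d) : ℕ := lam.sortedParts.getD i 0

lemma sortedGE_sortedParts (lam : n.Partition) : lam.sortedParts.SortedGE := by
  simpa [sortedParts] using (List.sortedLE_iff_pairwise.mpr (Multiset.pairwise_sort _ _))

lemma coe_sortedParts (lam : n.Partition) : (lam.sortedParts : Multiset ℕ) = lam.parts := by
  simp [sortedParts]

lemma length_sortedParts (lam : n.Partition) : lam.sortedParts.length = lam.parts.card := by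
  simp [sortedParts]

lemma antitone_paddedParts (lam : n.Partition) (d : ℕ) : Antitone (lam.paddedParts d) := by
  intro i j hij
  simp only [paddedParts, List.getD_eq_getElem?_getD]
  by_cases hj : (j : ℕ) < lam.sortedParts.length
  · rw [List.getElem?_eq_getElem hj, List.getElem?_eq_getElem (lt_of_le_of_lt hij hj)]
    exact lam.sortedGE_sortedParts.getElem_ge_getElem_of_le hij
  · simp [List.getElem?_eq_none (not_lt.mp hj)]

lemma paddedParts_le (lam : n.Partition) (d : ℕ) (i : Fin d) : lam.paddedParts d i ≤ n := by
  unfold paddedParts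
  rw [List.getD_eq_getElem?_getD]
  cases h : lam.sortedParts[(i : ℕ)]? with
  | none => simp
  | some a =>
    have := List.mem_of_getElem? h
    rw [← Multiset.mem_coe, coe_sortedParts] at this
    exact le_of_mem_parts this

lemma map_paddedParts (lam : n.Partition) {d : ℕ} (hd : lam.parts.card ≤ d) :
    univ.val.map (lam.paddedParts d) = lam.parts + Multiset.replicate (d - lam.parts.card) 0 := by
  rw [show lam.paddedParts d = fun i : Fin d => lam.sortedParts.getD i 0 from rfl,
    Fin.univ_val_map, List.ofFn_getD_eq_append_replicate _ _ (by rwa [length_sortedParts]),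
    ← Multiset.coe_add, coe_sortedParts, length_sortedParts, Multiset.coe_replicate]

lemma sum_paddedParts (lam : n.Partition) {d : ℕ} (hd : lam.parts.card ≤ d) :
    ∑ i, lam.paddedParts d i = n := by
  rw [sum_eq_multiset_sum, map_paddedParts lam hd]
  simp [lam.parts_sum]

lemma ofSums_paddedParts (lam : n.Partition) {d : ℕ} (hd : lam.parts.card ≤ d)
    (h : (univ.val.map (lam.paddedParts d)).sum = n) :
    ofSums n (univ.val.map (lam.paddedParts d)) h = lam := by
  ext : 1
  rw [ofSums_parts, map_paddedParts lam hd, Multiset.filter_add,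
    Multiset.filter_eq_self.mpr fun a ha => (lam.parts_pos ha).ne']
  simp [Multiset.filter_eq_nil.mpr fun a ha => not_not.mpr (Multiset.eq_of_mem_replicate ha)]

lemma card_ofSums_le {d : ℕ} (μ : Fin d → ℕ) (h : (univ.val.map μ).sum = n) :
    (ofSums n (univ.val.map μ) h).parts.card ≤ d := by
  simpa using Multiset.card_le_card (Multiset.filter_le (· ≠ 0) (univ.val.map μ))

lemma paddedParts_ofSums {d : ℕ} {μ : Fin d → ℕ} (hμ : Antitone μ) (h : (univ.val.map μ).sum = n) :
    (ofSums n (univ.val.map μ) h).paddedParts d = μ := by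
  refine (antitone_paddedParts _ d).eq_of_map_univ_eq hμ ?_
  rw [map_paddedParts _ (card_ofSums_le μ h), ofSums_parts]
  conv_rhs => rw [← Multiset.filter_add_not (· ≠ 0) (univ.val.map μ)]
  congr 1
  rw [eq_comm, Multiset.eq_replicate]
  refine ⟨?_, fun b hb => by simpa using Multiset.of_mem_filter hb⟩
  have := congrArg Multiset.card (Multiset.filter_add_not (· ≠ 0) (univ.val.map μ))
  simp only [Multiset.card_add, Multiset.card_map, card_val, Finset.card_univ, Fintype.card_fin]
    at this
  omega

end Nat.Partition

lemma StrictMono.add_sub_le {d : ℕ} {g : Fin d → ℕ} (hg : StrictMono g) {a b : Fin d}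
    (hab : a ≤ b) : g a + (b - a) ≤ g b := by
  have := card_le_card_of_injOn g (s := Icc a b) (t := Icc (g a) (g b))
    (fun x hx => by
      simp only [coe_Icc, Set.mem_Icc] at hx ⊢
      exact ⟨hg.monotone hx.1, hg.monotone hx.2⟩)
    hg.injective.injOn
  simp only [Fin.card_Icc, Nat.card_Icc] at this
  have := hg.monotone hab
  omega

lemma StrictMono.val_le {d : ℕ} {g : Fin d → ℕ} (hg : StrictMono g) (j : Fin d) :
    (j : ℕ) ≤ g j := by
  have := hg.add_sub_le (show (⟨0, j.pos⟩ : Fin d) ≤ j from Nat.zero_le _)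
  dsimp only at this
  omega

lemma StrictMono.antitone_sub_rev {d : ℕ} {g : Fin d → ℕ} (hg : StrictMono g) :
    Antitone fun i => g (Fin.rev i) - Fin.rev i := by
  intro a b hab
  have := hg.add_sub_le (Fin.rev_le_rev.mpr hab)
  have := hg.val_le (Fin.rev b)
  dsimp only
  omega

lemma Fin.sum_rev {M : Type*} [AddCommMonoid M] {d : ℕ} (f : Fin d → M) :
    ∑ i, f (Fin.rev i) = ∑ i, f i :=
  Fintype.sum_equiv Fin.revPerm _ _ fun _ => rfl

lemma StrictMono.sum_sub_rev_add {d : ℕ} {g : Fin d → ℕ} (hg : StrictMono g) :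
    ∑ i, (g (Fin.rev i) - Fin.rev i) + ∑ i : Fin d, (i : ℕ) = ∑ i, g i := by
  rw [Fin.sum_rev fun j => g j - j, ← sum_add_distrib]
  exact sum_congr rfl fun j _ => Nat.sub_add_cancel (hg.val_le j)

open Nat.Partition in
lemma sum_strictMono_eq_sum_partition {M : Type*} [AddCommMonoid M] {d n K : ℕ} (hK : n + d ≤ K)
    (F : (Fin d → ℕ) → M) :
    ∑ g : Fin d → Fin K with StrictMono g ∧ ∑ j, ((g j : Fin K) : ℕ) = n + ∑ j : Fin d, (j : ℕ),
        F (fun j => g j) =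
      ∑ lam : n.Partition with lam.parts.card ≤ d,
        F (fun j => lam.paddedParts d (Fin.rev j) + j) := by
  have sum_sub {g : Fin d → Fin K}
      (hg : StrictMono g ∧ ∑ j, ((g j : Fin K) : ℕ) = n + ∑ j : Fin d, (j : ℕ)) :
      (univ.val.map fun i => (g (Fin.rev i) : ℕ) - Fin.rev i).sum = n := by
    have := (Fin.val_strictMono.comp hg.1).sum_sub_rev_add
    rw [← sum_eq_multiset_sum]
    simp only [comp_apply] at this
    omega
  symm
  refine sum_bij' (fun lam _ j => ⟨lam.paddedParts d (Fin.rev j) + j, ?_⟩)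
    (fun g hg => ofSums n (univ.val.map fun i => g (Fin.rev i) - Fin.rev i)
      (sum_sub ((mem_filter_univ g).mp hg)))
    ?_ ?_ ?_ ?_ (fun _ _ => rfl)
  · have := lam.paddedParts_le d (Fin.rev j)
    omega
  · intro lam hlam
    rw [mem_filter_univ] at hlam ⊢
    refine ⟨fun a b hab => ?_, ?_⟩
    · have := lam.antitone_paddedParts d (Fin.rev_le_rev.mpr hab.le)
      rw [Fin.mk_lt_mk]
      have : (a : ℕ) < b := hab
      omega
    · rw [sum_add_distrib, Fin.sum_rev (lam.paddedParts d), sum_paddedParts lam hlam]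
  · exact fun g _ => (mem_filter_univ _).mpr (card_ofSums_le _ _)
  · intro lam hlam
    rw [mem_filter_univ] at hlam
    convert ofSums_paddedParts lam hlam
      (by rw [← sum_eq_multiset_sum, sum_paddedParts lam hlam]) using 3
    simp
  · intro g hg
    have hg' : StrictMono fun j => (g j : ℕ) :=
      Fin.val_strictMono.comp ((mem_filter_univ g).mp hg).1
    funext j
    apply Fin.ext
    simp only [paddedParts_ofSums hg'.antitone_sub_rev, Fin.rev_rev]
    exact Nat.sub_add_cancel (hg'.val_le j)

def jacobiTrudi {R : Type*} (h : ℤ → R) {k : ℕ} (μ : Fin k → ℕ) : Matrix (Fin k) (Fin k) R :=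
  Matrix.of fun i j => h ((μ i : ℤ) - i + j)

lemma det_jacobiTrudi_getD {R : Type*} [CommRing R] {h : ℤ → R} (h_zero : h 0 = 1)
    (h_neg : ∀ c < 0, h c = 0) (l : List ℕ) {d : ℕ} (hl : l.length ≤ d) :
    (jacobiTrudi h fun i : Fin d => l.getD i 0).det =
      (jacobiTrudi h fun i : Fin l.length => l.get i).det := by
  induction d, hl using Nat.le_induction with
  | base => congr; funext i; simp
  | succ d hd ih =>
    rw [← ih, Matrix.det_succ_row _ (Fin.last d), Fin.sum_univ_castSucc, sum_eq_zero, zero_add]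
    · simp [jacobiTrudi, List.getElem?_eq_none hd, h_zero, Matrix.submatrix]
    · intro j _
      simp only [jacobiTrudi, Matrix.of_apply, List.getD_eq_default _ _ hd, Fin.val_last,
        Fin.val_castSucc]
      rw [h_neg _ (by omega), mul_zero, zero_mul]

lemma hpoly_zero (t : ℕ → ℂ) : hpoly 0 t = 1 := by simp [hpoly]

lemma hZ_zero (t : ℕ → ℂ) : hZ 0 t = 1 := by simp [hZ, hpoly_zero]

lemma hZ_of_neg {c : ℤ} (hc : c < 0) (t : ℕ → ℂ) : hZ c t = 0 := if_neg (not_le.mpr hc)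

lemma nonneg_of_hZ_ne_zero {c : ℤ} {t : ℕ → ℂ} (h : hZ c t ≠ 0) : 0 ≤ c :=
  not_lt.mp fun hc => h (hZ_of_neg hc t)

lemma hZ_natCast (k : ℕ) (t : ℕ → ℂ) : hZ k t = hpoly k t := by simp [hZ]

-- `h_c(t) X^c`; the exponent `c.toNat` is junk for `c < 0`, where `hZ c t = 0`.
noncomputable def gradedH (c : ℤ) (t : ℕ → ℂ) : ℂ⟦X⟧ := C (hZ c t) * X ^ c.toNat

lemma coeff_gradedH_mul_gradedH (k : ℕ) (a b : ℤ) (t s : ℕ → ℂ) :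
    coeff k (gradedH a t * gradedH b s) = if a + b = k then hZ a t * hZ b s else 0 := by
  rcases lt_or_ge a 0 with ha | ha
  · simp [gradedH, hZ_of_neg ha]
  rcases lt_or_ge b 0 with hb | hb
  · simp [gradedH, hZ_of_neg hb]
  rw [gradedH, gradedH, mul_mul_mul_comm, ← map_mul, ← pow_add, coeff_C_mul_X_pow]
  congr 1
  exact propext (by omega)

lemma X_pow_mul_gradedH (i g : ℕ) (t : ℕ → ℂ) :
    X ^ i * gradedH ((g : ℤ) - i) t = C (hZ ((g : ℤ) - i) t) * X ^ g := by
  rcases lt_or_ge g i with hgi | hgi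
  · simp [gradedH, hZ_of_neg (show (g : ℤ) - i < 0 by omega)]
  · rw [gradedH, mul_left_comm, ← pow_add]
    congr 2
    omega

lemma coeff_phi (m : ℤ) (k : ℕ) (t s : ℕ → ℂ) :
    coeff k (phi m t s) = ∑ b ∈ range (k + 1), coeff k (gradedH b s * gradedH (b + m) t) := by
  rw [phi, coeff_mk, gesselSymbol, coeff_mul, AddMonoidAlgebra.coeff_sum, Finsupp.finsetSum_apply,
    ← Nat.sum_antidiagonal_swap, Nat.sum_antidiagonal_eq_sum_range_succ_mk]
  refine sum_congr rfl fun b hb => ?_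
  rw [coeff_mk, coeff_mk, ← LaurentPolynomial.single_eq_C_mul_T,
    ← LaurentPolynomial.single_eq_C_mul_T, AddMonoidAlgebra.single_mul_single,
    AddMonoidAlgebra.coeff_single, Finsupp.single_apply, coeff_gradedH_mul_gradedH]
  have hbk : b ≤ k := Nat.lt_succ_iff.mp (mem_range.mp hb)
  dsimp only [Prod.swap_prod_mk]
  by_cases hm : ((k - b : ℕ) : ℤ) + -b = m
  · have : (b : ℤ) + m = (k - b : ℕ) := by omega
    rw [if_pos hm, if_pos (by omega), this, hZ_natCast, hZ_natCast, mul_comm]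
  · rw [if_neg hm, if_neg (by omega)]

noncomputable def gradedMatrix (t : ℕ → ℂ) (d K : ℕ) : Matrix (Fin d) (Fin K) ℂ⟦X⟧ :=
  Matrix.of fun i e => gradedH ((e : ℤ) - i) t

lemma coeff_gradedMatrix_mul_transpose {d K k : ℕ} (hK : k + d ≤ K) (t s : ℕ → ℂ) (i j : Fin d) :
    coeff k ((gradedMatrix s d K * (gradedMatrix t d K)ᵀ) i j) = coeff k (phi (i - j) t s) := by
  rw [Matrix.mul_apply, map_sum, coeff_phi]
  have hF (c : ℤ) (hc : coeff k (gradedH c s * gradedH (c + (i - j)) t) ≠ 0) : 0 ≤ c ∧ c ≤ k := by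
    rw [coeff_gradedH_mul_gradedH, ne_eq, ite_eq_right_iff, not_forall] at hc
    obtain ⟨hck, hne⟩ := hc
    have := nonneg_of_hZ_ne_zero (left_ne_zero_of_mul hne)
    have := nonneg_of_hZ_ne_zero (right_ne_zero_of_mul hne)
    omega
  rw [← sum_fin_sub_eq_sum_range _ hF (show k + i < K by omega)]
  refine sum_congr rfl fun e _ => ?_
  simp only [gradedMatrix, Matrix.of_apply, Matrix.transpose_apply]
  ring_nf

lemma X_pow_mul_det_gradedH (t : ℕ → ℂ) {d : ℕ} (g : Fin d → ℕ) :
    X ^ (∑ i : Fin d, (i : ℕ)) * (Matrix.of fun i j : Fin d => gradedH ((g j : ℤ) - i) t).det =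
      C (Matrix.of fun i j : Fin d => hZ ((g j : ℤ) - i) t).det * X ^ (∑ j, g j) := by
  rw [← prod_pow_eq_pow_sum, ← Matrix.det_mul_column]
  simp only [Matrix.of_apply, X_pow_mul_gradedH]
  simp_rw [mul_comm (C _)]
  have := Matrix.det_mul_row (fun j => X ^ g j) (Matrix.of fun i j => C (hZ ((g j : ℤ) - i) t))
  simp only [Matrix.of_apply] at this
  rw [this, prod_pow_eq_pow_sum, RingHom.map_det]
  rfl

lemma coeff_det_gradedH_mul_det_gradedH (s t : ℕ → ℂ) {d : ℕ} (g : Fin d → ℕ) (N : ℕ) :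
    coeff N ((Matrix.of fun i j : Fin d => gradedH ((g j : ℤ) - i) s).det *
        (Matrix.of fun i j : Fin d => gradedH ((g j : ℤ) - i) t).det) =
      if N + 2 * ∑ i : Fin d, (i : ℕ) = 2 * ∑ j, g j then
        (Matrix.of fun i j : Fin d => hZ ((g j : ℤ) - i) s).det *
          (Matrix.of fun i j : Fin d => hZ ((g j : ℤ) - i) t).det
      else 0 := by
  rw [← coeff_X_pow_mul _ (2 * ∑ i : Fin d, (i : ℕ)), two_mul, pow_add, mul_mul_mul_comm,
    X_pow_mul_det_gradedH, X_pow_mul_det_gradedH, mul_mul_mul_comm, ← map_mul, ← pow_add,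
    coeff_C_mul_X_pow, two_mul]

lemma coeff_det_phi (d N : ℕ) (t s : ℕ → ℂ) :
    coeff N (Matrix.of fun i j : Fin d => phi ((i : ℤ) - (j : ℤ)) t s).det =
      ∑ g : Fin d → Fin (N + d) with StrictMono g,
        if N + 2 * ∑ i : Fin d, (i : ℕ) = 2 * ∑ j, ((g j : Fin (N + d)) : ℕ) then
          (Matrix.of fun i j : Fin d => hZ (((g j : ℕ) : ℤ) - i) s).det *
            (Matrix.of fun i j : Fin d => hZ (((g j : ℕ) : ℤ) - i) t).det
        else 0 := by
  rw [coeff_det_eq_of_coeff_eq (M₁ := Matrix.of fun i j : Fin d => phi ((i : ℤ) - (j : ℤ)) t s)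
      (M₂ := gradedMatrix s d (N + d) * (gradedMatrix t d (N + d))ᵀ)
      fun i j k hk => (coeff_gradedMatrix_mul_transpose (by omega) t s i j).symm,
    Matrix.det_mul_eq_sum_strictMono, map_sum]
  refine sum_congr rfl fun g _ => ?_
  rw [← Matrix.transpose_submatrix, Matrix.det_transpose]
  exact coeff_det_gradedH_mul_det_gradedH s t (fun j => g j) N

lemma det_hZ_paddedParts_eq_schur {n d : ℕ} (lam : n.Partition) (hlam : lam.parts.card ≤ d)
    (t : ℕ → ℂ) :
    (Matrix.of fun i j : Fin d => hZ (((lam.paddedParts d (Fin.rev j) + j : ℕ) : ℤ) - i) t).det =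
      schur lam t := by
  have : (Matrix.of fun i j : Fin d => hZ (((lam.paddedParts d (Fin.rev j) + j : ℕ) : ℤ) - i) t) =
      (jacobiTrudi (hZ · t) (lam.paddedParts d))ᵀ.submatrix Fin.revPerm Fin.revPerm := by
    ext i j
    simp only [jacobiTrudi, Matrix.of_apply, Matrix.submatrix_apply, Matrix.transpose_apply,
      Fin.revPerm_apply, Fin.val_rev]
    congr 1
    omega
  rw [this, Matrix.det_submatrix_equiv_self, Matrix.det_transpose]
  exact det_jacobiTrudi_getD (hZ_zero t) (fun c hc => hZ_of_neg hc t) _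
    (by rwa [Nat.Partition.length_sortedParts])

theorem stmt_16_general (d : ℕ) (t s : ℕ → ℂ) :
    (PowerSeries.mk fun N =>
        if h2 : 2 ∣ N then
          ∑ lam ∈ Finset.univ.filter
            (fun lam : (N / 2).Partition => lam.parts.card ≤ d),
            schur lam t * schur lam s
        else 0) =
      Matrix.det (Matrix.of fun i j : Fin d => phi ((i : ℤ) - (j : ℤ)) t s) := by
  ext N
  rw [coeff_mk, coeff_det_phi]
  split_ifs with hN
  · obtain ⟨n, rfl⟩ := hN
    rw [← sum_filter, filter_filter, Nat.mul_div_cancel_left n two_pos]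
    simp_rw [show ∀ a b : ℕ, 2 * n + 2 * a = 2 * b ↔ b = n + a by omega]
    rw [sum_strictMono_eq_sum_partition (by omega)
      fun g => (Matrix.of fun i j : Fin d => hZ ((g j : ℤ) - i) s).det *
        (Matrix.of fun i j : Fin d => hZ ((g j : ℤ) - i) t).det]
    refine sum_congr rfl fun lam hlam => ?_
    rw [mem_filter_univ] at hlam
    rw [det_hZ_paddedParts_eq_schur lam hlam, det_hZ_paddedParts_eq_schur lam hlam, mul_comm]
  · exact (sum_eq_zero fun g _ => if_neg (by omega)).symm

/-- Gessel's Toeplitz determinant identity: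
`∑_{ℓ(λ) ≤ d} s_λ(t) s_λ(s) = det_{1≤i,j≤d} (φ_{i-j}(t,s))`, as formal series graded by
placing `t_k` and `s_k` in degree `k` (so the degree-`N` component of the left-hand
side is the finite sum over partitions `λ` of `N/2` with at most `d` parts). -/
theorem stmt_16 (d : ℕ) (hd : 1 ≤ d) (t s : ℕ → ℂ) :
    (PowerSeries.mk fun N =>
        if h2 : 2 ∣ N then
          ∑ lam ∈ Finset.univ.filter
            (fun lam : (N / 2).Partition => lam.parts.card ≤ d),
            schur lam t * schur lam s
        else 0) =
      Matrix.det (Matrix.of fun i j : Fin d => phi ((i : ℤ) - (j : ℤ)) t s) :=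
  stmt_16_general d t s
end

section
/- For a nonnegative integer k and a complex number v with |v|^2/2 < 1, (1/π) ∫_ℂ t^k e^{(\bar{v}^2/2)\bar{t}^2 - |t|^2} dA(t) = (1/√(2π)) ∫_ℝ (\bar{v}x)^k e^{-x^2/2} dx. -/
open MeasureTheory

open Real Nat Complex Filter

lemma gamma_half (m : ℕ) : Real.Gamma ((m : ℝ) + 1/2) = Real.sqrt π * (2*m)! / (4^m * m !) := by
  induction m with
  | zero => simpa using Real.Gamma_one_half_eq
  | succ m ih =>
    have h0 : ((m : ℝ) + 1/2) ≠ 0 := by positivity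
    have : ((m+1 : ℕ) : ℝ) + 1/2 = ((m:ℝ) + 1/2) + 1 := by push_cast; ring
    rw [this, Real.Gamma_add_one h0, ih]
    have h1 : (2*(m+1))! = (2*m+2) * ((2*m+1) * (2*m)!) := by
      have : 2*(m+1) = (2*m+1) + 1 := by ring
      rw [this, Nat.factorial_succ, Nat.factorial_succ]
    rw [h1, Nat.factorial_succ]
    push_cast
    have h4 : (4:ℝ)^(m+1) = 4 * 4^m := by ring
    rw [h4]
    have hm : ((m ! : ℕ) : ℝ) ≠ 0 := by exact_mod_cast Nat.factorial_ne_zero m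
    field_simp
    ring

lemma moment_even (m : ℕ) :
    ∫ x : ℝ, x ^ (2*m) * Real.exp (-x^2/2) = Real.sqrt (2*π) * (2*m)! / (2^m * m !) := by
  have step1 : ∫ x : ℝ, x ^ (2*m) * Real.exp (-x^2/2)
      = 2 * ∫ x in Set.Ioi (0:ℝ), x ^ (2*m) * Real.exp (-x^2/2) := by
    rw [← integral_comp_abs (f := fun y => y ^ (2*m) * Real.exp (-y^2/2))]
    exact integral_congr_ae (Filter.Eventually.of_forall fun x => by
      simp only; rw [pow_mul, ← _root_.sq_abs, ← pow_mul])
  rw [step1]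
  have step2 : ∀ x ∈ Set.Ioi (0:ℝ), x ^ (2*m) * Real.exp (-x^2/2)
      = x ^ ((2*m : ℕ) : ℝ) * Real.exp (-(1/2) * x ^ (2:ℝ)) := by
    intro x hx
    rw [Real.rpow_natCast, Real.rpow_two]
    ring_nf
  rw [setIntegral_congr_fun measurableSet_Ioi step2,
    integral_rpow_mul_exp_neg_mul_rpow two_pos (lt_of_lt_of_le neg_one_lt_zero (Nat.cast_nonneg _)) (by norm_num : (0:ℝ) < 1/2)]
  have h2 : (((2*m : ℕ) : ℝ) + 1)/2 = (m : ℝ) + 1/2 := by push_cast; ring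
  have h3 : -(((2*m : ℕ) : ℝ) + 1)/2 = -((m : ℝ) + 1/2) := by push_cast; ring
  rw [h2, h3, gamma_half]
  have h5 : ((1:ℝ)/2) ^ (-((m:ℝ) + 1/2)) = 2 ^ (m:ℝ) * Real.sqrt 2 := by
    rw [one_div, Real.inv_rpow (by norm_num), ← Real.rpow_neg (by norm_num), neg_neg,
      Real.rpow_add two_pos, Real.sqrt_eq_rpow]
    norm_num
  rw [h5, Real.rpow_natCast, Real.sqrt_mul (by norm_num : (0:ℝ) ≤ 2)]
  have h6 : (4:ℝ)^m = 2^m * 2^m := by rw [← mul_pow]; norm_num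
  rw [h6]
  have hm : ((m ! : ℕ) : ℝ) ≠ 0 := by exact_mod_cast Nat.factorial_ne_zero m
  have h2m : ((2:ℝ))^m ≠ 0 := by positivity
  field_simp

lemma moment_odd (m : ℕ) :
    ∫ x : ℝ, x ^ (2*m+1) * Real.exp (-x^2/2) = 0 := by
  have := integral_neg_eq_self (fun x : ℝ => x ^ (2*m+1) * Real.exp (-x^2/2)) volume
  have h : ∀ x : ℝ, (-x) ^ (2*m+1) * Real.exp (-(-x)^2/2)
      = -(x ^ (2*m+1) * Real.exp (-x^2/2)) := by
    intro x
    rw [Odd.neg_pow ⟨m, by ring⟩, neg_sq]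
    ring
  simp_rw [h, integral_neg] at this
  linarith

lemma angular (n : ℤ) :
    ∫ θ in Set.Ioo (-π) π, Complex.exp (n * θ * Complex.I) =
      if n = 0 then (2*π : ℂ) else 0 := by
  have hle : (-π : ℝ) ≤ π := by linarith [pi_pos]
  rw [← integral_Ioc_eq_integral_Ioo, ← intervalIntegral.integral_of_le hle]
  by_cases hn : n = 0
  · subst hn
    simp only [Int.cast_zero, zero_mul, Complex.exp_zero, if_pos rfl]
    rw [intervalIntegral.integral_const]
    push_cast
    ring_nf
    simp [two_mul]
  · rw [if_neg hn]
    have hc : ((n : ℂ) * Complex.I) ≠ 0 := by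
      simp [Complex.I_ne_zero, Int.cast_ne_zero, hn]
    have hderiv : ∀ θ ∈ Set.uIcc (-π) π,
        HasDerivAt (fun t : ℝ => Complex.exp ((n : ℂ) * Complex.I * t) / ((n : ℂ) * Complex.I))
          (Complex.exp ((n:ℂ) * θ * Complex.I)) θ := by
      intro θ _
      have h1 : HasDerivAt (fun t : ℝ => ((n : ℂ) * Complex.I * t))
          ((n:ℂ) * Complex.I) θ := by
        simpa using (Complex.ofRealCLM.hasDerivAt (x := θ)).const_mul ((n:ℂ) * Complex.I)
      have h2 := (h1.cexp).div_const ((n : ℂ) * Complex.I)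
      have : Complex.exp ((n:ℂ) * Complex.I * θ) * ((n:ℂ) * Complex.I) / ((n:ℂ) * Complex.I)
          = Complex.exp ((n:ℂ) * θ * Complex.I) := by
        rw [mul_div_cancel_right₀ _ hc, mul_right_comm]
      rwa [this] at h2
    have hint : IntervalIntegrable (fun θ : ℝ => Complex.exp ((n:ℂ) * θ * Complex.I))
        volume (-π) π := by
      apply Continuous.intervalIntegrable
      continuity
    rw [intervalIntegral.integral_eq_sub_of_hasDerivAt hderiv hint]
    have e1 : ((n:ℂ) * Complex.I * (π:ℝ)) = (n : ℂ) * ((π:ℝ) * Complex.I) := by ring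
    have e2 : ((n:ℂ) * Complex.I * ((-π:ℝ):ℂ)) = ((-n : ℤ) : ℂ) * ((π:ℝ) * Complex.I) := by
      push_cast; ring
    rw [e1, e2, Complex.exp_int_mul, Complex.exp_int_mul, Complex.exp_pi_mul_I]
    have : ((-1 : ℂ)) ^ (-n) = (-1 : ℂ) ^ n := by
      rw [zpow_neg]
      refine inv_eq_of_mul_eq_one_right ?_
      rw [← zpow_add₀ (by norm_num : (-1:ℂ) ≠ 0)]
      simpa using Even.neg_one_zpow ⟨n, by ring⟩
    simp [this]

lemma radial (m : ℕ) :
    ∫ r in Set.Ioi (0:ℝ), r ^ (m+1) * Real.exp (-r^2)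
      = Real.Gamma (((m:ℝ)+2)/2) / 2 := by
  have step : ∀ r ∈ Set.Ioi (0:ℝ), r ^ (m+1) * Real.exp (-r^2)
      = r ^ ((m+1 : ℕ) : ℝ) * Real.exp (-r ^ (2:ℝ)) := by
    intro r hr
    rw [Real.rpow_natCast, Real.rpow_two]
  rw [setIntegral_congr_fun measurableSet_Ioi step,
    integral_rpow_mul_exp_neg_rpow two_pos
      (lt_of_lt_of_le neg_one_lt_zero (Nat.cast_nonneg _))]
  have : (((m+1:ℕ):ℝ) + 1)/2 = ((m:ℝ)+2)/2 := by push_cast; ring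
  rw [this]
  ring

lemma ofReal_setIntegral (f : ℝ → ℝ) (s : Set ℝ) :
    ∫ x in s, (f x : ℂ) = ((∫ x in s, f x : ℝ) : ℂ) :=
  integral_ofReal

lemma Jlem (a b : ℕ) :
    ∫ t : ℂ, t ^ a * (starRingEnd ℂ t) ^ b * (Real.exp (-‖t‖^2) : ℂ)
      = if a = b then (π : ℂ) * a ! else 0 := by
  rw [← Complex.integral_comp_polarCoord_symm]
  have hcong : ∀ p ∈ polarCoord.target,
      p.1 • ((Complex.polarCoord.symm p) ^ a *
        (starRingEnd ℂ (Complex.polarCoord.symm p)) ^ b *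
        (Real.exp (-‖Complex.polarCoord.symm p‖^2) : ℂ))
      = ((p.1 ^ (a+b+1) * Real.exp (-p.1^2) : ℝ) : ℂ) *
          Complex.exp ((((a : ℤ) - (b : ℤ) : ℤ) : ℂ) * p.2 * Complex.I) := by
    rintro ⟨r, θ⟩ ⟨hr, hθ⟩
    have hsymm : Complex.polarCoord.symm (r, θ) = (r : ℂ) * Complex.exp (θ * Complex.I) := by
      rw [Complex.polarCoord_symm_apply, Complex.exp_mul_I]
      norm_num
    have hnorm : ‖Complex.polarCoord.symm (r, θ)‖ = r := by
      rw [hsymm, norm_mul, Complex.norm_exp_ofReal_mul_I, Complex.norm_real, Real.norm_eq_abs,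
        abs_of_pos (by exact hr), mul_one]
    have hconj : (starRingEnd ℂ) (Complex.polarCoord.symm (r, θ))
        = (r : ℂ) * Complex.exp (-(θ * Complex.I)) := by
      rw [hsymm, map_mul, Complex.conj_ofReal, ← Complex.exp_conj]
      congr 1
      simp
    have key : ((r:ℂ) * Complex.exp (θ * Complex.I))^a *
        ((r:ℂ) * Complex.exp (-(θ * Complex.I)))^b
        = (r:ℂ)^(a+b) * Complex.exp ((((a:ℤ)-(b:ℤ) : ℤ) : ℂ) * θ * Complex.I) := by
      rw [mul_pow, mul_pow, ← Complex.exp_nat_mul, ← Complex.exp_nat_mul, pow_add,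
        mul_mul_mul_comm, ← Complex.exp_add]
      congr 2
      push_cast
      ring
    rw [hnorm, hconj, hsymm, key, Complex.real_smul]
    push_cast
    ring
  rw [setIntegral_congr_fun polarCoord.open_target.measurableSet hcong, polarCoord_target,
    Measure.volume_eq_prod,
    setIntegral_prod_mul (fun r : ℝ => ((r ^ (a+b+1) * Real.exp (-r^2) : ℝ) : ℂ))
      (fun θ : ℝ => Complex.exp ((((a:ℤ)-(b:ℤ) : ℤ) : ℂ) * θ * Complex.I)),
    ofReal_setIntegral, radial (a+b),
    angular ((a:ℤ) - (b:ℤ))]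
  by_cases hab : a = b
  · subst hab
    rw [if_pos (by ring), if_pos rfl]
    have : (((a+a:ℕ):ℝ)+2)/2 = (a:ℝ) + 1 := by push_cast; ring
    rw [this, Real.Gamma_nat_eq_factorial]
    push_cast
    ring
  · rw [if_neg (by omega), if_neg hab, mul_zero]

lemma ptwise_bound (m : ℕ) (u : ℝ) (hu : 0 ≤ u) :
    u^m * Real.exp (-u^2) ≤ (1 + 2^m * m !) * Real.exp (-u^2/2) := by
  have key : u^m * Real.exp (-u^2/2) ≤ 1 + 2^m * m ! := by
    rcases le_or_gt u 1 with h | h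
    · have h1 : u^m ≤ 1 := pow_le_one₀ hu h
      have h2 : Real.exp (-u^2/2) ≤ 1 := Real.exp_le_one_iff.mpr (by nlinarith)
      nlinarith [pow_nonneg hu m, Real.exp_pos (-u^2/2), pow_pos (by norm_num : (0:ℝ) < 2) m,
        (by exact_mod_cast Nat.factorial_pos m : (0:ℝ) < m !)]
    · have h1 : u^m ≤ (u^2)^m := by
        rw [← pow_mul]
        exact pow_le_pow_right₀ h.le (by omega)
      have h2 : (u^2/2)^m / m ! ≤ Real.exp (u^2/2) :=
        Real.pow_div_factorial_le_exp (x := u^2/2) (by positivity) m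
      have h3 : (u^2)^m ≤ 2^m * m ! * Real.exp (u^2/2) := by
        have : (u^2/2)^m = (u^2)^m / 2^m := by rw [div_pow]
        rw [this] at h2
        have hfac : (0:ℝ) < m ! := by exact_mod_cast Nat.factorial_pos m
        have h2m : (0:ℝ) < 2^m := by positivity
        calc (u^2)^m = ((u^2)^m / 2^m / m !) * (2^m * m !) := by field_simp
          _ ≤ Real.exp (u^2/2) * (2^m * m !) := by
              apply mul_le_mul_of_nonneg_right h2 (by positivity)
          _ = 2^m * m ! * Real.exp (u^2/2) := by ring
      calc u^m * Real.exp (-u^2/2) ≤ (u^2)^m * Real.exp (-u^2/2) := by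
            apply mul_le_mul_of_nonneg_right h1 (Real.exp_pos _).le
        _ ≤ 2^m * m ! * Real.exp (u^2/2) * Real.exp (-u^2/2) := by
            apply mul_le_mul_of_nonneg_right h3 (Real.exp_pos _).le
        _ = 2^m * m ! := by rw [mul_assoc, ← Real.exp_add, show u^2/2 + -u^2/2 = 0 by ring, Real.exp_zero, mul_one]
        _ ≤ 1 + 2^m * m ! := by linarith
  have : Real.exp (-u^2) = Real.exp (-u^2/2) * Real.exp (-u^2/2) := by
    rw [← Real.exp_add]; ring_nf
  rw [this, ← mul_assoc]
  exact mul_le_mul_of_nonneg_right key (Real.exp_pos _).le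

lemma integrable_gauss_c : Integrable (fun t : ℂ => Real.exp (-‖t‖^2/2)) := by
  have h1 : Integrable (fun p : ℝ × ℝ => Real.exp (-(1/2) * p.1^2) * Real.exp (-(1/2) * p.2^2)) :=
    (integrable_exp_neg_mul_sq one_half_pos).mul_prod (integrable_exp_neg_mul_sq one_half_pos)
  have hmp := Complex.volume_preserving_equiv_real_prod
  rw [← hmp.integrable_comp_emb (Complex.measurableEquivRealProd.measurableEmbedding)] at h1
  refine h1.congr (Filter.Eventually.of_forall fun t => ?_)
  simp only [Function.comp_apply, Complex.measurableEquivRealProd_apply]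
  rw [← Real.exp_add]
  congr 1
  rw [Complex.sq_norm, Complex.normSq_apply]
  ring

lemma integrable_H (a b : ℕ) :
    Integrable (fun t : ℂ => t ^ a * (starRingEnd ℂ t) ^ b * (Real.exp (-‖t‖^2) : ℂ)) := by
  apply Integrable.mono' (integrable_gauss_c.const_mul ((1 + 2^(a+b) * (a+b)! : ℝ)))
  · apply Continuous.aestronglyMeasurable
    refine ((continuous_pow a).mul (Complex.continuous_conj.pow b)).mul ?_
    exact Complex.continuous_ofReal.comp (Real.continuous_exp.comp (by fun_prop))
  · refine Filter.Eventually.of_forall fun t => ?_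
    rw [norm_mul, norm_mul, norm_pow, norm_pow, RCLike.norm_conj, Complex.norm_real,
      Real.norm_eq_abs, abs_of_pos (Real.exp_pos _), ← pow_add]
    exact ptwise_bound (a+b) ‖t‖ (norm_nonneg t)

lemma norm_integral_H (a b : ℕ) :
    ∫ t : ℂ, ‖t ^ a * (starRingEnd ℂ t) ^ b * (Real.exp (-‖t‖^2) : ℂ)‖
      = π * Real.Gamma (((a+b:ℕ):ℝ)/2 + 1) := by
  have : ∀ t : ℂ, ‖t ^ a * (starRingEnd ℂ t) ^ b * (Real.exp (-‖t‖^2) : ℂ)‖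
      = ‖t‖ ^ (((a+b:ℕ):ℝ)) * Real.exp (-1 * ‖t‖ ^ (2:ℝ)) := by
    intro t
    rw [norm_mul, norm_mul, norm_pow, norm_pow, RCLike.norm_conj, Complex.norm_real,
      Real.norm_eq_abs, abs_of_pos (Real.exp_pos _), ← pow_add, Real.rpow_natCast,
      Real.rpow_two, neg_one_mul]
  simp_rw [this]
  rw [Complex.integral_rpow_mul_exp_neg_mul_rpow one_le_two
      (lt_of_lt_of_le (by norm_num) (Nat.cast_nonneg _)) one_pos]
  rw [Real.one_rpow]
  have : (((a+b:ℕ):ℝ) + 2)/2 = ((a+b:ℕ):ℝ)/2 + 1 := by ring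
  rw [this]
  ring

lemma summable_aux (C : ℝ) (hC : 0 ≤ C) (hC1 : C < 1) (s : ℝ) (hs : 0 < s) :
    Summable (fun n : ℕ => C^n / n ! * Real.Gamma ((n:ℝ) + s)) := by
  have hρ : C < (1+C)/2 := by linarith
  apply summable_of_ratio_norm_eventually_le (r := (1+C)/2) (by linarith)
  have h0 : Tendsto (fun n : ℕ => C * (((n:ℝ)+s)/((n:ℝ)+1))) atTop (nhds C) := by
    have h1 : Tendsto (fun n : ℕ => 1 + (s-1) * (1/((n:ℝ)+1))) atTop (nhds 1) := by
      simpa using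
        (tendsto_const_nhds (x := (1:ℝ)) (f := atTop (α := ℕ))).add
          (tendsto_one_div_add_atTop_nhds_zero_nat.const_mul (s-1))
    have he : ∀ n : ℕ, 1 + (s-1) * (1/((n:ℝ)+1)) = ((n:ℝ)+s)/((n:ℝ)+1) := by
      intro n
      have : ((n:ℝ)+1) ≠ 0 := by positivity
      field_simp
      ring
    have h2 : Tendsto (fun n : ℕ => ((n:ℝ)+s)/((n:ℝ)+1)) atTop (nhds 1) := h1.congr he
    simpa using h2.const_mul C
  have hev : ∀ᶠ n : ℕ in atTop, C * (((n:ℝ)+s)/((n:ℝ)+1)) ≤ (1+C)/2 :=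
    h0.eventually_le_const hρ
  filter_upwards [hev] with n hn
  have hΓpos : ∀ j : ℕ, 0 < Real.Gamma ((j:ℝ) + s) := fun j =>
    Real.Gamma_pos_of_pos (by positivity)
  have hfac : (0:ℝ) < n ! := by exact_mod_cast Nat.factorial_pos n
  have hterm : C^(n+1) / (n+1)! * Real.Gamma (((n+1:ℕ):ℝ) + s)
      = (C * (((n:ℝ)+s)/((n:ℝ)+1))) * (C^n / n ! * Real.Gamma ((n:ℝ) + s)) := by
    have hΓ : Real.Gamma (((n+1:ℕ):ℝ) + s) = ((n:ℝ) + s) * Real.Gamma ((n:ℝ) + s) := by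
      have : (((n+1:ℕ):ℝ) + s) = ((n:ℝ) + s) + 1 := by push_cast; ring
      rw [this, Real.Gamma_add_one (by positivity)]
    rw [hΓ, Nat.factorial_succ]
    push_cast
    have h1 : ((n:ℝ)+1) ≠ 0 := by positivity
    field_simp
    ring
  rw [Real.norm_eq_abs, Real.norm_eq_abs,
    _root_.abs_of_nonneg (by positivity : (0:ℝ) ≤ C^n / n ! * Real.Gamma ((n:ℝ) + s)),
    _root_.abs_of_nonneg (by positivity : (0:ℝ) ≤ C^(n+1) / (n+1)! * Real.Gamma (((n+1:ℕ):ℝ) + s)),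
    hterm]
  exact mul_le_mul_of_nonneg_right hn (by positivity)


open Real Nat Complex Filter in
/-- moment matching behind the `r = 2` quadrature identity, case `l = 0`:
for every `k ≥ 0` and `v : ℂ` with `|v|²/2 < 1`,
`(1/π) ∫_ℂ t^k e^{(v̄²/2) t̄² - |t|²} dA(t) = (1/√(2π)) ∫_ℝ (v̄ x)^k e^{-x²/2} dx`. -/
theorem stmt_19 (k : ℕ) (v : ℂ) (hv : ‖v‖ ^ 2 / 2 < 1) :
    (Real.pi : ℂ)⁻¹ *
      ∫ t : ℂ, t ^ k *
        Complex.exp ((starRingEnd ℂ v) ^ 2 / 2 * (starRingEnd ℂ t) ^ 2 -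
          (‖t‖ : ℂ) ^ 2) =
    ((Real.sqrt (2 * Real.pi) : ℂ))⁻¹ *
      ∫ x : ℝ, (starRingEnd ℂ v * x) ^ k * Complex.exp (-(x : ℂ) ^ 2 / 2) := by
  set c : ℂ := (starRingEnd ℂ v) ^ 2 / 2 with hc_def
  have hcnorm : ‖c‖ = ‖v‖ ^ 2 / 2 := by
    rw [hc_def, norm_div, norm_pow, RCLike.norm_conj]
    norm_num
  have hclt : ‖c‖ < 1 := by rw [hcnorm]; exact hv
  set F : ℕ → ℂ → ℂ := fun n t => c ^ n / (n ! : ℂ) *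
      (t ^ k * (starRingEnd ℂ t) ^ (2*n) * (Real.exp (-‖t‖^2) : ℂ)) with hF
  -- expansion of the integrand as a series
  have hexpand : ∀ t : ℂ,
      t ^ k * Complex.exp (c * (starRingEnd ℂ t) ^ 2 - (‖t‖ : ℂ) ^ 2) = ∑' n, F n t := by
    intro t
    have h1 : Complex.exp (c * (starRingEnd ℂ t) ^ 2 - (‖t‖ : ℂ) ^ 2)
        = Complex.exp (c * (starRingEnd ℂ t) ^ 2) * ((Real.exp (-‖t‖^2) : ℝ) : ℂ) := by
      rw [sub_eq_add_neg, Complex.exp_add]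
      congr 1
      rw [Complex.ofReal_exp]
      congr 1
      push_cast
      ring
    have h2 : Complex.exp (c * (starRingEnd ℂ t) ^ 2)
        = ∑' n : ℕ, c ^ n * (starRingEnd ℂ t) ^ (2*n) / (n ! : ℂ) := by
      rw [Complex.exp_eq_exp_ℂ, NormedSpace.exp_eq_tsum_div]
      exact tsum_congr fun n => by rw [mul_pow, pow_mul]
    rw [h1, h2, ← tsum_mul_right, ← tsum_mul_left]
    exact tsum_congr fun n => by rw [hF]; ring
  have hFint : ∀ n : ℕ, Integrable (F n) := fun n => (integrable_H k (2*n)).const_mul _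
  have hnormint : ∀ n : ℕ, (∫ t : ℂ, ‖F n t‖)
      = π * (‖c‖ ^ n / n ! * Real.Gamma ((n:ℝ) + ((k:ℝ)/2 + 1))) := by
    intro n
    have : ∀ t : ℂ, ‖F n t‖ = ‖c‖ ^ n / n ! *
        ‖t ^ k * (starRingEnd ℂ t) ^ (2*n) * (Real.exp (-‖t‖^2) : ℂ)‖ := by
      intro t
      rw [hF]
      simp only [norm_mul, norm_div, norm_pow, Complex.norm_natCast]
    simp_rw [this]
    rw [integral_const_mul, norm_integral_H k (2*n)]
    have harg : ((k + 2*n : ℕ) : ℝ)/2 + 1 = (n:ℝ) + ((k:ℝ)/2 + 1) := by push_cast; ring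
    rw [harg]
    ring
  have hsum : Summable (fun n : ℕ => ∫ t : ℂ, ‖F n t‖) := by
    simp_rw [hnormint]
    exact (summable_aux ‖c‖ (norm_nonneg c) hclt ((k:ℝ)/2 + 1) (by positivity)).mul_left π
  have hswap := integral_tsum_of_summable_integral_norm hFint hsum
  have hL : (∫ t : ℂ, t ^ k *
        Complex.exp (c * (starRingEnd ℂ t) ^ 2 - (‖t‖ : ℂ) ^ 2))
      = ∑' n : ℕ, ∫ t : ℂ, F n t := by
    rw [integral_congr_ae (Filter.Eventually.of_forall hexpand)]
    exact hswap.symm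
  have hterm : ∀ n : ℕ, (∫ t : ℂ, F n t)
      = c ^ n / (n ! : ℂ) * (if k = 2*n then (π : ℂ) * k ! else 0) := by
    intro n
    rw [hF]
    simp only
    rw [integral_const_mul, Jlem k (2*n)]
  rw [hL]
  simp_rw [hterm]
  -- right-hand side
  have hR : (∫ x : ℝ, (starRingEnd ℂ v * x) ^ k * Complex.exp (-(x : ℂ) ^ 2 / 2))
      = (starRingEnd ℂ v) ^ k * ((∫ x : ℝ, x ^ k * Real.exp (-x^2/2) : ℝ) : ℂ) := by
    have h1 : ∀ x : ℝ, (starRingEnd ℂ v * x) ^ k * Complex.exp (-(x : ℂ) ^ 2 / 2)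
        = (starRingEnd ℂ v) ^ k * ((x ^ k * Real.exp (-x^2/2) : ℝ) : ℂ) := by
      intro x
      rw [mul_pow]
      have : ((x ^ k * Real.exp (-x^2/2) : ℝ) : ℂ)
          = (x : ℂ) ^ k * Complex.exp (-(x : ℂ) ^ 2 / 2) := by
        push_cast [Complex.ofReal_exp]
        ring_nf
      rw [this]
      ring
    simp_rw [h1]
    rw [integral_const_mul]
    congr 1
    exact integral_ofReal
  rw [hR]
  rcases Nat.even_or_odd k with ⟨m, hm⟩ | ⟨m, hm⟩
  · -- even case
    have hk2m : k = 2*m := by omega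
    subst hk2m
    have htsum : ∑' n : ℕ, (c ^ n / (n ! : ℂ) * (if 2*m = 2*n then (π : ℂ) * (2*m)! else 0))
        = c ^ m / (m ! : ℂ) * ((π : ℂ) * (2*m)!) := by
      rw [tsum_eq_single m ?_]
      · rw [if_pos rfl]
      · intro n hn
        rw [if_neg (by omega), mul_zero]
    rw [htsum, moment_even m]
    have hπ : (π : ℂ) ≠ 0 := Complex.ofReal_ne_zero.mpr pi_ne_zero
    have hsq2π : ((Real.sqrt (2*π) : ℝ) : ℂ) ≠ 0 :=
      Complex.ofReal_ne_zero.mpr (Real.sqrt_pos.mpr (by positivity)).ne'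
    have hmfac : ((m ! : ℕ) : ℂ) ≠ 0 := Nat.cast_ne_zero.mpr (Nat.factorial_ne_zero m)
    have h2m : ((2 : ℂ)) ^ m ≠ 0 := pow_ne_zero m two_ne_zero
    have hcm : c ^ m = (starRingEnd ℂ v) ^ (2*m) / 2 ^ m := by
      rw [hc_def, div_pow, ← pow_mul]
    have hs2 : ((Real.sqrt 2 : ℝ) : ℂ) ≠ 0 :=
      Complex.ofReal_ne_zero.mpr (Real.sqrt_pos.mpr (by norm_num)).ne'
    have hsπ : ((Real.sqrt Real.pi : ℝ) : ℂ) ≠ 0 :=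
      Complex.ofReal_ne_zero.mpr (Real.sqrt_pos.mpr pi_pos).ne'
    rw [hcm]
    push_cast
    field_simp
  · -- odd case
    have hzero : ∀ n : ℕ, (c ^ n / (n ! : ℂ) * (if k = 2*n then (π : ℂ) * k ! else 0)) = 0 := by
      intro n
      rw [if_neg (by omega), mul_zero]
    rw [tsum_congr hzero, tsum_zero, mul_zero]
    have : k = 2*m + 1 := by omega
    subst this
    rw [moment_odd m]
    simp
end
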